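/- Let X, Y, Z be finite-dimensional real inner product spaces, f1: Y → (−∞,+∞] and f2: Z → (−∞,+∞] proper closed convex functions, B1: Y → X and B2: Z → X linear, c ∈ X, and σ > 0. Assume that for every (y,x) the function z ↦ L_σ(y,z;x) has a unique minimizer and for every (z,x) the function y ↦ L_σ(y,z;x) has a unique minimizer (which holds when ∂f1 + σB1^*B1 and ∂f2 + σB2^*B2 are maximal and strongly monotone). Start both algorithms from the same (y^0, x^0) ∈ dom(f1) × X (and any z^0 ∈ dom(f2) for Algorithm 4). Then for all k ≥ 0, the iterates of the HPR method without proximal terms (Algorithm 3) and of the Halpern accelerating pADMM without proximal terms (Algorithm 4) satisfy y^{k+1} = ȳ^{k+1}, z^{k+1} = z̄^{k+1}, and x^{k+1/2} = x̄^{k+1}. -/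

import Mathlib

open scoped RealInnerProductSpace
open Filter Topology

noncomputable section

/-- Augmented Lagrangian of `min f1(y) + f2(z) s.t. B1 y + B2 z = c`. -/
def augL5 {X Y Z : Type*}
    [NormedAddCommGroup X] [InnerProductSpace ℝ X]
    [NormedAddCommGroup Y] [InnerProductSpace ℝ Y]
    [NormedAddCommGroup Z] [InnerProductSpace ℝ Z]
    (f1 : Y → EReal) (f2 : Z → EReal)
    (B1 : Y →L[ℝ] X) (B2 : Z →L[ℝ] X) (c : X) (σ : ℝ)
    (y : Y) (z : Z) (x : X) : EReal :=
  f1 y + f2 z + ((⟪x, B1 y + B2 z - c⟫ + σ / 2 * ‖B1 y + B2 z - c‖ ^ 2 : ℝ) : EReal)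

/-- the HPR method without proximal terms (Algorithm 3) and the Halpern
accelerating pADMM without proximal terms (Algorithm 4), started from the same point,
produce the same iterates: `y^{k+1} = ȳ^{k+1}`, `z^{k+1} = z̄^{k+1}`, `x^{k+1/2} = x̄^{k+1}`. -/
theorem hpr_eq_halpern_padmm
    {X Y Z : Type*}
    [NormedAddCommGroup X] [InnerProductSpace ℝ X] [FiniteDimensional ℝ X]
    [NormedAddCommGroup Y] [InnerProductSpace ℝ Y] [FiniteDimensional ℝ Y]
    [NormedAddCommGroup Z] [InnerProductSpace ℝ Z] [FiniteDimensional ℝ Z]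
    (f1 : Y → EReal) (f2 : Z → EReal)
    -- f1, f2 proper
    (hf1ne : ∀ y, f1 y ≠ ⊥) (hf1dom : ∃ y, f1 y ≠ ⊤)
    (hf2ne : ∀ z, f2 z ≠ ⊥) (hf2dom : ∃ z, f2 z ≠ ⊤)
    -- f1, f2 closed (lower semicontinuous)
    (hf1lsc : LowerSemicontinuous f1) (hf2lsc : LowerSemicontinuous f2)
    -- f1, f2 convex
    (hf1cvx : ∀ y1 y2 : Y, ∀ a b : ℝ, 0 ≤ a → 0 ≤ b → a + b = 1 →
      f1 (a • y1 + b • y2) ≤ (a : EReal) * f1 y1 + (b : EReal) * f1 y2)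
    (hf2cvx : ∀ z1 z2 : Z, ∀ a b : ℝ, 0 ≤ a → 0 ≤ b → a + b = 1 →
      f2 (a • z1 + b • z2) ≤ (a : EReal) * f2 z1 + (b : EReal) * f2 z2)
    (B1 : Y →L[ℝ] X) (B2 : Z →L[ℝ] X) (c : X) (σ : ℝ) (hσ : 0 < σ)
    -- each subproblem has a unique minimizer
    (huz : ∀ (y : Y) (x : X), ∃! z : Z, ∀ z' : Z,
      augL5 f1 f2 B1 B2 c σ y z x ≤ augL5 f1 f2 B1 B2 c σ y z' x)
    (huy : ∀ (z : Z) (x : X), ∃! y : Y, ∀ y' : Y,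
      augL5 f1 f2 B1 B2 c σ y z x ≤ augL5 f1 f2 B1 B2 c σ y' z x)
    -- common starting point
    (y0 : Y) (z0 : Z) (x0 : X) (hy0 : f1 y0 ≠ ⊤) (hz0 : f2 z0 ≠ ⊤)
    -- Algorithm 3 (HPR without proximal terms)
    (y3 : ℕ → Y) (z3 : ℕ → Z) (xh x3 xt : ℕ → X)
    (h3y0 : y3 0 = y0) (h3x0 : x3 0 = x0) (h3xt0 : xt 0 = x0)
    (h3z : ∀ k, ∀ z' : Z,
      augL5 f1 f2 B1 B2 c σ (y3 k) (z3 (k + 1)) (xt k)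
        ≤ augL5 f1 f2 B1 B2 c σ (y3 k) z' (xt k))
    (h3xh : ∀ k, xh k = xt k + σ • (B1 (y3 k) + B2 (z3 (k + 1)) - c))
    (h3y : ∀ k, ∀ y' : Y,
      augL5 f1 f2 B1 B2 c σ (y3 (k + 1)) (z3 (k + 1)) (xh k)
        ≤ augL5 f1 f2 B1 B2 c σ y' (z3 (k + 1)) (xh k))
    (h3x : ∀ k, x3 (k + 1) = xh k + σ • (B1 (y3 (k + 1)) + B2 (z3 (k + 1)) - c))
    (h3xt : ∀ k, xt (k + 1)
        = ((k : ℝ) + 2)⁻¹ • xt 0 + (((k : ℝ) + 1) / ((k : ℝ) + 2)) • x3 (k + 1)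
          + (σ / ((k : ℝ) + 2)) • (B1 (y3 0) - B1 (y3 (k + 1))))
    -- Algorithm 4 (Halpern accelerating pADMM without proximal terms), w = (y, z, x)
    (w wbar what : ℕ → Y × Z × X)
    (h4w0 : w 0 = (y0, z0, x0))
    (h4z : ∀ k, ∀ z' : Z,
      augL5 f1 f2 B1 B2 c σ ((w k).1) ((wbar (k + 1)).2.1) ((w k).2.2)
        ≤ augL5 f1 f2 B1 B2 c σ ((w k).1) z' ((w k).2.2))
    (h4x : ∀ k, (wbar (k + 1)).2.2
        = (w k).2.2 + σ • (B1 ((w k).1) + B2 ((wbar (k + 1)).2.1) - c))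
    (h4y : ∀ k, ∀ y' : Y,
      augL5 f1 f2 B1 B2 c σ ((wbar (k + 1)).1) ((wbar (k + 1)).2.1) ((wbar (k + 1)).2.2)
        ≤ augL5 f1 f2 B1 B2 c σ y' ((wbar (k + 1)).2.1) ((wbar (k + 1)).2.2))
    (h4hat : ∀ k, what (k + 1) = (2 : ℝ) • wbar (k + 1) - w k)
    (h4upd : ∀ k, w (k + 1)
        = ((k : ℝ) + 2)⁻¹ • w 0 + (((k : ℝ) + 1) / ((k : ℝ) + 2)) • what (k + 1)) :
    ∀ k : ℕ, y3 (k + 1) = (wbar (k + 1)).1 ∧ z3 (k + 1) = (wbar (k + 1)).2.1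
      ∧ xh k = (wbar (k + 1)).2.2 := by

  -- Decomposition of the augmented Lagrangian: the part depending on `z` only
  -- depends on `x + σ • (B1 y - c)`, the rest is a constant (in `z`).
  have decomp : ∀ (y : Y) (z : Z) (x : X), augL5 f1 f2 B1 B2 c σ y z x
      = (f2 z + ((⟪x + σ • (B1 y - c), B2 z⟫ + σ / 2 * ‖B2 z‖ ^ 2 : ℝ) : EReal))
        + (f1 y + ((⟪x, B1 y - c⟫ + σ / 2 * ‖B1 y - c‖ ^ 2 : ℝ) : EReal)) := by
    intro y z x
    have hv : B1 y + B2 z - c = (B1 y - c) + B2 z := by abel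
    have hre : (⟪x, B1 y + B2 z - c⟫ + σ / 2 * ‖B1 y + B2 z - c‖ ^ 2 : ℝ)
        = (⟪x + σ • (B1 y - c), B2 z⟫ + σ / 2 * ‖B2 z‖ ^ 2)
          + (⟪x, B1 y - c⟫ + σ / 2 * ‖B1 y - c‖ ^ 2) := by
      rw [hv, norm_add_sq_real, inner_add_right, inner_add_left, real_inner_smul_left]
      ring
    rw [augL5, hre, EReal.coe_add]
    abel
  -- the key one-step lemma
  have key : ∀ k, (f1 (y3 k) ≠ ⊤ ∧ (w k).2.2 + σ • B1 ((w k).1) = xt k + σ • B1 (y3 k)) →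
      (y3 (k + 1) = (wbar (k + 1)).1 ∧ z3 (k + 1) = (wbar (k + 1)).2.1
        ∧ xh k = (wbar (k + 1)).2.2) ∧ f1 (y3 (k + 1)) ≠ ⊤ := by
    intro k hk
    obtain ⟨hfin, hinv⟩ := hk
    obtain ⟨r, hr⟩ : ∃ r : ℝ, f1 (y3 k) = (r : EReal) :=
      ⟨(f1 (y3 k)).toReal, (EReal.coe_toReal hfin (hf1ne _)).symm⟩
    have hvx : (w k).2.2 + σ • (B1 ((w k).1) - c) = xt k + σ • (B1 (y3 k) - c) := by
      rw [smul_sub, smul_sub, add_sub, add_sub, hinv]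
    -- z3 (k+1) is also a minimizer of the Algorithm-4 z-subproblem
    have hz3min : ∀ z' : Z,
        augL5 f1 f2 B1 B2 c σ ((w k).1) (z3 (k + 1)) ((w k).2.2)
          ≤ augL5 f1 f2 B1 B2 c σ ((w k).1) z' ((w k).2.2) := by
      intro z'
      have h1 := h3z k z'
      rw [decomp, decomp, hr, ← EReal.coe_add] at h1
      have hgle := (EReal.addLECancellable_coe _).add_le_add_iff_right.mp h1
      rw [decomp, decomp, hvx]
      exact add_le_add hgle le_rfl
    have hzeq : z3 (k + 1) = (wbar (k + 1)).2.1 := by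
      obtain ⟨zm, _, huniq⟩ := huz ((w k).1) ((w k).2.2)
      rw [huniq _ hz3min, huniq _ (h4z k)]
    have hxeq : xh k = (wbar (k + 1)).2.2 := by
      rw [h3xh k, h4x k, ← hzeq]
      calc xt k + σ • (B1 (y3 k) + B2 (z3 (k + 1)) - c)
          = (xt k + σ • B1 (y3 k)) + σ • (B2 (z3 (k + 1)) - c) := by module
        _ = ((w k).2.2 + σ • B1 ((w k).1)) + σ • (B2 (z3 (k + 1)) - c) := by rw [hinv]
        _ = (w k).2.2 + σ • (B1 ((w k).1) + B2 (z3 (k + 1)) - c) := by module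
    have hyeq : y3 (k + 1) = (wbar (k + 1)).1 := by
      obtain ⟨ym, _, huniq⟩ := huy (z3 (k + 1)) (xh k)
      have h4y' := h4y k
      rw [← hzeq, ← hxeq] at h4y'
      rw [huniq _ (h3y k), huniq _ h4y']
    have hf2fin : f2 (z3 (k + 1)) ≠ ⊤ := by
      intro htop
      have h := h3z k z0
      rw [augL5, augL5, htop, EReal.add_top_of_ne_bot (hf1ne _),
        EReal.top_add_of_ne_bot (EReal.coe_ne_bot _), top_le_iff] at h
      exact (EReal.add_lt_top (EReal.add_lt_top hfin hz0).ne (EReal.coe_ne_top _)).ne h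
    have hf1fin' : f1 (y3 (k + 1)) ≠ ⊤ := by
      intro htop
      have h := h3y k (y3 k)
      rw [augL5, augL5, htop, EReal.top_add_of_ne_bot (hf2ne _),
        EReal.top_add_of_ne_bot (EReal.coe_ne_bot _), top_le_iff] at h
      exact (EReal.add_lt_top (EReal.add_lt_top hfin hf2fin).ne (EReal.coe_ne_top _)).ne h
    exact ⟨⟨hyeq, hzeq, hxeq⟩, hf1fin'⟩
  -- the invariant, by induction
  have inv : ∀ k, f1 (y3 k) ≠ ⊤ ∧ (w k).2.2 + σ • B1 ((w k).1) = xt k + σ • B1 (y3 k) := by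
    intro k
    induction k with
    | zero =>
      constructor
      · rw [h3y0]; exact hy0
      · rw [h4w0, h3xt0, h3y0]
    | succ k ih =>
      obtain ⟨⟨hyeq, hzeq, hxeq⟩, hfin'⟩ := key k ih
      refine ⟨hfin', ?_⟩
      have hk2 : ((k : ℝ) + 2) ≠ 0 := by positivity
      have hw1 : (w (k + 1)).1
          = ((k : ℝ) + 2)⁻¹ • y0
            + (((k : ℝ) + 1) / ((k : ℝ) + 2)) • ((2 : ℝ) • (wbar (k + 1)).1 - (w k).1) := by
        rw [h4upd, h4hat, h4w0]
        simp
      have hw3 : (w (k + 1)).2.2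
          = ((k : ℝ) + 2)⁻¹ • x0
            + (((k : ℝ) + 1) / ((k : ℝ) + 2)) • ((2 : ℝ) • (wbar (k + 1)).2.2 - (w k).2.2) := by
        rw [h4upd, h4hat, h4w0]
        simp
      have hwk2 : (w k).2.2 = xt k + σ • B1 (y3 k) - σ • B1 ((w k).1) :=
        eq_sub_of_add_eq ih.2
      rw [hw1, hw3, hwk2, h3xt k, h3xt0, h3x k, ← hyeq, ← hxeq, h3xh k, h3y0]
      simp only [map_add, map_sub, map_smul]
      match_scalars <;> (field_simp; try ring) <;> tauto
  intro k
  exact (key k (inv k)).1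


end
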